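/- arXiv:1604.03813 — 6 statements merged into one kernel-verified Lean document; each statement's English description precedes it below -/
import Mathlib

section
/- Let q, h, a : ℝ → ℝ³ satisfy the timelike Frenet equations q' = k₁ h, h' = -ε k₁ q + k₂ a, a' = ε k₂ h with k₁, k₂ nonvanishing and ε = ±1. If the ratio k₁/k₂ equals a constant -ε c_a / c_q (with c_q ≠ 0), then the vector u(s) = c_q q(s) + c_a a(s) is constant (u' = 0), and hence ⟨q, u⟩ = ε c_q is constant, so the surface is a q-slant ruled surface. -/
/-- Minkowski inner product on `ℝ³`: `⟨x,y⟩ = -x₁y₁ + x₂y₂ + x₃y₃`. -/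
noncomputable def mink (x y : Fin 3 → ℝ) : ℝ :=
  -(x 0 * y 0) + x 1 * y 1 + x 2 * y 2

/-- Lorentzian cross product `x × y = (x₂y₃ - x₃y₂, x₁y₃ - x₃y₁, x₂y₁ - x₁y₂)`. -/
noncomputable def lcross (x y : Fin 3 → ℝ) : Fin 3 → ℝ :=
  ![x 1 * y 2 - x 2 * y 1, x 0 * y 2 - x 2 * y 0, x 1 * y 0 - x 0 * y 1]

/-- Mixed product `det(u,v,w) = ⟨u × v, w⟩`. -/
noncomputable def ldet (u v w : Fin 3 → ℝ) : ℝ := mink (lcross u v) w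

theorem stmt2 (q h a : ℝ → Fin 3 → ℝ) (k₁ k₂ : ℝ → ℝ) (ε : ℝ)
    (hsq : ContDiff ℝ (⊤ : ℕ∞) q) (hsh : ContDiff ℝ (⊤ : ℕ∞) h) (hsa : ContDiff ℝ (⊤ : ℕ∞) a)
    (hsk₁ : ContDiff ℝ (⊤ : ℕ∞) k₁) (hsk₂ : ContDiff ℝ (⊤ : ℕ∞) k₂)
    (hk₁ : ∀ s, k₁ s ≠ 0) (hk₂ : ∀ s, k₂ s ≠ 0)
    (hε : ε = 1 ∨ ε = -1)
    (hF1 : ∀ s, deriv q s = k₁ s • h s)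
    (hF2 : ∀ s, deriv h s = (-(ε * k₁ s)) • q s + k₂ s • a s)
    (hF3 : ∀ s, deriv a s = (ε * k₂ s) • h s)
    (hqq : ∀ s, mink (q s) (q s) = ε) (haa : ∀ s, mink (a s) (a s) = -ε)
    (hqa : ∀ s, mink (q s) (a s) = 0)
    (c_q c_a : ℝ) (hcq : c_q ≠ 0)
    (hratio : ∀ s, k₁ s / k₂ s = -(ε * c_a) / c_q) :
    (∀ s, deriv (fun t => c_q • q t + c_a • a t) s = 0) ∧
    (∀ s, mink (q s) (c_q • q s + c_a • a s) = ε * c_q) := by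
  constructor
  · intro s
    have dq : DifferentiableAt ℝ q s := (hsq.differentiable (by simp)) s
    have da : DifferentiableAt ℝ a s := (hsa.differentiable (by simp)) s
    rw [deriv_fun_add (f := fun t => c_q • q t) (g := fun t => c_a • a t)
        (dq.const_smul c_q) (da.const_smul c_a),
      deriv_fun_const_smul c_q dq, deriv_fun_const_smul c_a da, hF1, hF3]
    have hk : k₁ s = -(ε * c_a) / c_q * k₂ s := by
      have := hratio s
      rw [div_eq_div_iff (hk₂ s) hcq] at this
      field_simp
      linarith
    rw [hk, smul_smul, smul_smul]
    have : c_q * (-(ε * c_a) / c_q * k₂ s) = -(c_a * (ε * k₂ s)) := by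
      field_simp
    rw [this]
    simp
  · intro s
    have h1 := hqq s
    have h2 := hqa s
    simp only [mink, Pi.add_apply, Pi.smul_apply, smul_eq_mul] at *
    linear_combination c_q * h1 + c_a * h2
end

section
/- Let q, h, a : ℝ → ℝ³ satisfy the timelike Frenet equations q' = k₁ h, h' = -ε k₁ q + k₂ a, a' = ε k₂ h with k₁, k₂ smooth nonvanishing and ε = ±1. If k₁/k₂ is constant, then q''' + m q' = 3 k₁' h', where m = -k₁''/k₁ + ε(k₁² - k₂²). -/
theorem stmt8 (q h a : ℝ → Fin 3 → ℝ) (k₁ k₂ : ℝ → ℝ) (ε : ℝ)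
    (hsq : ContDiff ℝ (⊤ : ℕ∞) q) (hsh : ContDiff ℝ (⊤ : ℕ∞) h) (hsa : ContDiff ℝ (⊤ : ℕ∞) a)
    (hsk₁ : ContDiff ℝ (⊤ : ℕ∞) k₁) (hsk₂ : ContDiff ℝ (⊤ : ℕ∞) k₂)
    (hk₁ : ∀ s, k₁ s ≠ 0) (hk₂ : ∀ s, k₂ s ≠ 0)
    (hε : ε = 1 ∨ ε = -1)
    (hF1 : ∀ s, deriv q s = k₁ s • h s)
    (hF2 : ∀ s, deriv h s = (-(ε * k₁ s)) • q s + k₂ s • a s)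
    (hF3 : ∀ s, deriv a s = (ε * k₂ s) • h s)
    (hconst : ∃ c, ∀ s, k₁ s / k₂ s = c) :
    ∀ s, deriv (deriv (deriv q)) s +
        (-(deriv (deriv k₁) s) / k₁ s + ε * ((k₁ s) ^ 2 - (k₂ s) ^ 2)) • deriv q s =
      (3 * deriv k₁ s) • deriv h s := by
  obtain ⟨c, hc⟩ := hconst
  have hk12 : ∀ s, k₁ s = c * k₂ s := fun s => (div_eq_iff (hk₂ s)).mp (hc s)
  have hc0 : c ≠ 0 := by
    intro hc0
    exact hk₁ 0 (by rw [hk12 0, hc0, zero_mul])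
  have dq : Differentiable ℝ q := hsq.differentiable (by simp)
  have dh : Differentiable ℝ h := hsh.differentiable (by simp)
  have da : Differentiable ℝ a := hsa.differentiable (by simp)
  have dk₂ : Differentiable ℝ k₂ := hsk₂.differentiable (by simp)
  have hsk₂' : ContDiff ℝ ((⊤ : ℕ∞) : WithTop ℕ∞) k₂ := hsk₂.of_le (by simp)
  have dk₂' : Differentiable ℝ (deriv k₂) :=
    ((contDiff_infty_iff_deriv.mp hsk₂').2.differentiable (by simp))
  have Hk₂ : ∀ s, HasDerivAt k₂ (deriv k₂ s) s := fun s => (dk₂ s).hasDerivAt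
  have Hk₂' : ∀ s, HasDerivAt (deriv k₂) (deriv (deriv k₂) s) s := fun s => (dk₂' s).hasDerivAt
  have Hk₁ : ∀ s, HasDerivAt k₁ (c * deriv k₂ s) s := fun s => by
    have : HasDerivAt (fun t => c * k₂ t) (c * deriv k₂ s) s := (Hk₂ s).const_mul c
    exact this.congr_of_eventuallyEq (Filter.Eventually.of_forall hk12)
  have hd1 : ∀ s, deriv k₁ s = c * deriv k₂ s := fun s => (Hk₁ s).deriv
  have hd2 : ∀ s, deriv (deriv k₁) s = c * deriv (deriv k₂) s := fun s => by
    have hfun : deriv k₁ = fun t => c * deriv k₂ t := funext hd1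
    rw [hfun]
    exact ((Hk₂' s).const_mul c).deriv
  have Hq : ∀ s, HasDerivAt q (k₁ s • h s) s := fun s => hF1 s ▸ (dq s).hasDerivAt
  have Hh : ∀ s, HasDerivAt h ((-(ε * k₁ s)) • q s + k₂ s • a s) s := fun s =>
    hF2 s ▸ (dh s).hasDerivAt
  have Ha : ∀ s, HasDerivAt a ((ε * k₂ s) • h s) s := fun s => hF3 s ▸ (da s).hasDerivAt
  -- second derivative of q as a function
  have hq2 : deriv (deriv q) = fun s =>
      k₁ s • ((-(ε * k₁ s)) • q s + k₂ s • a s) + (c * deriv k₂ s) • h s := by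
    funext s
    have : deriv q = fun t => k₁ t • h t := funext hF1
    rw [this]
    exact ((Hk₁ s).smul (Hh s)).deriv
  intro s
  -- third derivative of q at s
  have Hneg : HasDerivAt (fun t => -(ε * k₁ t)) (-(ε * (c * deriv k₂ s))) s :=
    ((Hk₁ s).const_mul ε).neg
  have Hinner : HasDerivAt (fun t => (-(ε * k₁ t)) • q t + k₂ t • a t)
      (((-(ε * k₁ s)) • (k₁ s • h s) + (-(ε * (c * deriv k₂ s))) • q s) +
        (k₂ s • ((ε * k₂ s) • h s) + deriv k₂ s • a s)) s :=
    (Hneg.smul (Hq s)).add ((Hk₂ s).smul (Ha s))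
  have H1 : HasDerivAt (fun t => k₁ t • ((-(ε * k₁ t)) • q t + k₂ t • a t))
      (k₁ s • (((-(ε * k₁ s)) • (k₁ s • h s) + (-(ε * (c * deriv k₂ s))) • q s) +
        (k₂ s • ((ε * k₂ s) • h s) + deriv k₂ s • a s)) +
        (c * deriv k₂ s) • ((-(ε * k₁ s)) • q s + k₂ s • a s)) s :=
    (Hk₁ s).smul Hinner
  have H2 : HasDerivAt (fun t => (c * deriv k₂ t) • h t)
      ((c * deriv k₂ s) • ((-(ε * k₁ s)) • q s + k₂ s • a s) +
        (c * deriv (deriv k₂) s) • h s) s :=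
    ((Hk₂' s).const_mul c).smul (Hh s)
  have hq3 : deriv (deriv (deriv q)) s =
      (k₁ s • (((-(ε * k₁ s)) • (k₁ s • h s) + (-(ε * (c * deriv k₂ s))) • q s) +
        (k₂ s • ((ε * k₂ s) • h s) + deriv k₂ s • a s)) +
        (c * deriv k₂ s) • ((-(ε * k₁ s)) • q s + k₂ s • a s)) +
      ((c * deriv k₂ s) • ((-(ε * k₁ s)) • q s + k₂ s • a s) +
        (c * deriv (deriv k₂) s) • h s) := by
    rw [hq2]
    exact (H1.add H2).deriv
  rw [hq3, hF1 s, hF2 s, hd1 s, hd2 s]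
  simp only [hk12]
  funext i
  simp only [Pi.add_apply, Pi.smul_apply, smul_eq_mul, Pi.neg_apply]
  have hk2s := hk₂ s
  field_simp
  ring
end

section
/- Let q, h, a : ℝ → ℝ³ satisfy the timelike Frenet equations q' = k₁ h, h' = -ε k₁ q + k₂ a, a' = ε k₂ h with k₁, k₂ smooth and nonvanishing, ε = ±1, and suppose a is nonvanishing in the sense that the frame is linearly independent at each point. If q''' + m q' = 3 k₁' h' holds identically with m = -k₁''/k₁ + ε(k₁² - k₂²), then k₂'/k₂ = k₁'/k₁, and hence k₁/k₂ is constant. -/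
theorem stmt9 (q h a : ℝ → Fin 3 → ℝ) (k₁ k₂ : ℝ → ℝ) (ε : ℝ)
    (hsq : ContDiff ℝ (⊤ : ℕ∞) q) (hsh : ContDiff ℝ (⊤ : ℕ∞) h) (hsa : ContDiff ℝ (⊤ : ℕ∞) a)
    (hsk₁ : ContDiff ℝ (⊤ : ℕ∞) k₁) (hsk₂ : ContDiff ℝ (⊤ : ℕ∞) k₂)
    (hk₁ : ∀ s, k₁ s ≠ 0) (hk₂ : ∀ s, k₂ s ≠ 0)
    (hε : ε = 1 ∨ ε = -1)
    (hF1 : ∀ s, deriv q s = k₁ s • h s)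
    (hF2 : ∀ s, deriv h s = (-(ε * k₁ s)) • q s + k₂ s • a s)
    (hF3 : ∀ s, deriv a s = (ε * k₂ s) • h s)
    (hli : ∀ s, LinearIndependent ℝ ![q s, h s, a s])
    (heq : ∀ s, deriv (deriv (deriv q)) s +
        (-(deriv (deriv k₁) s) / k₁ s + ε * ((k₁ s) ^ 2 - (k₂ s) ^ 2)) • deriv q s =
      (3 * deriv k₁ s) • deriv h s) :
    (∀ s, deriv k₂ s / k₂ s = deriv k₁ s / k₁ s) ∧ ∃ c, ∀ s, k₁ s / k₂ s = c := by
  have hq := hsq.differentiable (by simp)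
  have hh := hsh.differentiable (by simp)
  have ha := hsa.differentiable (by simp)
  have hk1d := hsk₁.differentiable (by simp)
  have hk2d := hsk₂.differentiable (by simp)
  have hk1' := (contDiff_infty_iff_deriv.mp (hsk₁.of_le (by simp))).2
  have hk1'd := hk1'.differentiable (by simp)
  -- pointwise HasDerivAt
  have hqd : ∀ s, HasDerivAt q (k₁ s • h s) s := fun s => hF1 s ▸ (hq s).hasDerivAt
  have hhd : ∀ s, HasDerivAt h ((-(ε * k₁ s)) • q s + k₂ s • a s) s :=
    fun s => hF2 s ▸ (hh s).hasDerivAt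
  have had : ∀ s, HasDerivAt a ((ε * k₂ s) • h s) s := fun s => hF3 s ▸ (ha s).hasDerivAt
  have hk₁d : ∀ s, HasDerivAt k₁ (deriv k₁ s) s := fun s => (hk1d s).hasDerivAt
  have hk₂d : ∀ s, HasDerivAt k₂ (deriv k₂ s) s := fun s => (hk2d s).hasDerivAt
  have hk₁dd : ∀ s, HasDerivAt (deriv k₁) (deriv (deriv k₁) s) s := fun s => (hk1'd s).hasDerivAt
  have e1 : deriv q = fun s => k₁ s • h s := funext hF1
  have d2 : ∀ s, HasDerivAt (deriv q)
      (k₁ s • ((-(ε * k₁ s)) • q s + k₂ s • a s) + deriv k₁ s • h s) s := by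
    intro s; rw [e1]; exact (hk₁d s).smul (hhd s)
  have e2 : deriv (deriv q) =
      fun s => k₁ s • ((-(ε * k₁ s)) • q s + k₂ s • a s) + deriv k₁ s • h s :=
    funext fun s => (d2 s).deriv
  have gd : ∀ s, HasDerivAt (fun s => (-(ε * k₁ s)) • q s + k₂ s • a s)
      (((-(ε * k₁ s)) • (k₁ s • h s) + (-(ε * deriv k₁ s)) • q s) +
        (k₂ s • ((ε * k₂ s) • h s) + deriv k₂ s • a s)) s :=
    fun s => ((((hk₁d s).const_mul ε).neg).smul (hqd s)).add ((hk₂d s).smul (had s))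
  have d3 : ∀ s, HasDerivAt (deriv (deriv q))
      ((k₁ s • (((-(ε * k₁ s)) • (k₁ s • h s) + (-(ε * deriv k₁ s)) • q s) +
          (k₂ s • ((ε * k₂ s) • h s) + deriv k₂ s • a s)) +
        deriv k₁ s • ((-(ε * k₁ s)) • q s + k₂ s • a s)) +
       (deriv k₁ s • ((-(ε * k₁ s)) • q s + k₂ s • a s) + deriv (deriv k₁) s • h s)) s := by
    intro s; rw [e2]
    exact ((hk₁d s).smul (gd s)).add ((hk₁dd s).smul (hhd s))
  have key : ∀ s, k₁ s * deriv k₂ s - deriv k₁ s * k₂ s = 0 := by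
    intro s
    have H := heq s
    rw [(d3 s).deriv, hF1 s, hF2 s] at H
    have h0 := sub_eq_zero.mpr H
    set B : ℝ := deriv (deriv k₁) s - ε * (k₁ s)^3 + ε * k₁ s * (k₂ s)^2 +
      (-(deriv (deriv k₁) s) / k₁ s + ε * ((k₁ s)^2 - (k₂ s)^2)) * k₁ s with hB
    have hz : (0:ℝ) • q s + B • h s +
        (k₁ s * deriv k₂ s - deriv k₁ s * k₂ s) • a s = 0 := by
      rw [← h0, hB]; module
    have := Fintype.linearIndependent_iff.mp (hli s)
      ![0, B, k₁ s * deriv k₂ s - deriv k₁ s * k₂ s]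
      (by simpa [Fin.sum_univ_three] using hz) 2
    simpa using this
  refine ⟨fun s => ?_, ⟨k₁ 0 / k₂ 0, fun s => ?_⟩⟩
  · rw [div_eq_div_iff (hk₂ s) (hk₁ s)]
    linarith [key s]
  · have hdiff : Differentiable ℝ (fun s => k₁ s / k₂ s) := hk1d.div hk2d hk₂
    have hz : ∀ x, deriv (fun s => k₁ s / k₂ s) x = 0 := by
      intro x
      rw [deriv_fun_div (hk1d x) (hk2d x) (hk₂ x), div_eq_zero_iff]
      left; linarith [key x]
    exact is_const_of_deriv_eq_zero hdiff hz s 0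
end

section
/- Let q, h, a : ℝ → ℝ³ satisfy the spacelike Frenet equations q' = k₁ h, h' = k₁ q + k₂ a, a' = k₂ h with k₁, k₂ nonvanishing. If k₁/k₂ is constant, then q''' + m q' = 3 k₁' h' where m = -(k₁''/k₁ + k₁² + k₂²). -/
theorem stmt10 (q h a : ℝ → Fin 3 → ℝ) (k₁ k₂ : ℝ → ℝ)
    (hsq : ContDiff ℝ (⊤ : ℕ∞) q) (hsh : ContDiff ℝ (⊤ : ℕ∞) h) (hsa : ContDiff ℝ (⊤ : ℕ∞) a)
    (hsk₁ : ContDiff ℝ (⊤ : ℕ∞) k₁) (hsk₂ : ContDiff ℝ (⊤ : ℕ∞) k₂)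
    (hk₁ : ∀ s, k₁ s ≠ 0) (hk₂ : ∀ s, k₂ s ≠ 0)
    (hF1 : ∀ s, deriv q s = k₁ s • h s)
    (hF2 : ∀ s, deriv h s = k₁ s • q s + k₂ s • a s)
    (hF3 : ∀ s, deriv a s = k₂ s • h s)
    (hconst : ∃ c, ∀ s, k₁ s / k₂ s = c) :
    ∀ s, deriv (deriv (deriv q)) s +
        (-(deriv (deriv k₁) s / k₁ s + (k₁ s) ^ 2 + (k₂ s) ^ 2)) • deriv q s =
      (3 * deriv k₁ s) • deriv h s := by

  obtain ⟨c, hc⟩ := hconst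
  have hh := hsh.differentiable (by simp)
  have hq := hsq.differentiable (by simp)
  have ha := hsa.differentiable (by simp)
  have hk1d := hsk₁.differentiable (by simp)
  have hk2d := hsk₂.differentiable (by simp)
  have hk1'd : Differentiable ℝ (deriv k₁) :=
    ((contDiff_infty_iff_deriv.mp (hsk₁.of_le (by simp))).2).differentiable (by simp)
  have hceq : ∀ s, k₁ s = c * k₂ s := fun s => (div_eq_iff (hk₂ s)).mp (hc s)
  have hck' : ∀ s, deriv k₁ s = c * deriv k₂ s := by
    intro s
    have hfe : k₁ = fun s => c * k₂ s := funext hceq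
    rw [hfe, deriv_const_mul _ (hk2d s)]
  have hdq : deriv q = fun s => k₁ s • h s := funext hF1
  have hq2 : deriv (deriv q) =
      fun s => deriv k₁ s • h s + ((k₁ s * k₁ s) • q s + (k₁ s * k₂ s) • a s) := by
    funext s
    rw [hdq, deriv_fun_smul (hk1d s) (hh s), hF2 s, smul_add, smul_smul, smul_smul]; module
  intro s
  rw [hq2]
  have d1 : DifferentiableAt ℝ (fun s => deriv k₁ s • h s) s :=
    (hk1'd s).smul (hh s)
  have d2 : DifferentiableAt ℝ (fun s => (k₁ s * k₁ s) • q s) s :=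
    ((hk1d s).mul (hk1d s)).smul (hq s)
  have d3 : DifferentiableAt ℝ (fun s => (k₁ s * k₂ s) • a s) s :=
    ((hk1d s).mul (hk2d s)).smul (ha s)
  rw [deriv_fun_add d1 (d2.fun_add d3), deriv_fun_add d2 d3,
    deriv_fun_smul (hk1'd s) (hh s),
    deriv_fun_smul ((hk1d s).fun_mul (hk1d s)) (hq s),
    deriv_fun_smul ((hk1d s).fun_mul (hk2d s)) (ha s),
    deriv_fun_mul (hk1d s) (hk1d s), deriv_fun_mul (hk1d s) (hk2d s),
    hF1 s, hF2 s, hF3 s]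
  have hc0 : c ≠ 0 := by
    intro h0
    exact hk₁ 0 (by rw [hceq 0, h0, zero_mul])
  funext i
  simp only [Pi.add_apply, Pi.smul_apply, smul_eq_mul, Pi.neg_apply]
  rw [hceq s, hck' s]
  field_simp [hc0, hk₂ s]
  ring
end

section
/- Let q, h, a : ℝ → ℝ³ satisfy the timelike Frenet equations q' = k₁ h, h' = -ε k₁ q + k₂ a, a' = ε k₂ h with k₁, k₂ nonvanishing, ε = ±1, and suppose ε(k₂² - k₁²) > 0 everywhere. If the function d(s) = k₁² / (ε(k₂² - k₁²))^{3/2} · (k₂/k₁)' is constant, then the vector u(s) = (k₂/√(ε(k₂² - k₁²))) q(s) - d h(s) - (ε k₁/√(ε(k₂² - k₁²))) a(s) is constant, and ⟨h, u⟩ is constant (where ⟨h,h⟩ = 1). -/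
theorem stmt12 (q h a : ℝ → Fin 3 → ℝ) (k₁ k₂ : ℝ → ℝ) (ε : ℝ)
    (hsq : ContDiff ℝ (⊤ : ℕ∞) q) (hsh : ContDiff ℝ (⊤ : ℕ∞) h) (hsa : ContDiff ℝ (⊤ : ℕ∞) a)
    (hsk₁ : ContDiff ℝ (⊤ : ℕ∞) k₁) (hsk₂ : ContDiff ℝ (⊤ : ℕ∞) k₂)
    (hk₁ : ∀ s, k₁ s ≠ 0) (hk₂ : ∀ s, k₂ s ≠ 0)
    (hε : ε = 1 ∨ ε = -1)
    (hF1 : ∀ s, deriv q s = k₁ s • h s)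
    (hF2 : ∀ s, deriv h s = (-(ε * k₁ s)) • q s + k₂ s • a s)
    (hF3 : ∀ s, deriv a s = (ε * k₂ s) • h s)
    (hqq : ∀ s, mink (q s) (q s) = ε) (hhh : ∀ s, mink (h s) (h s) = 1)
    (haa : ∀ s, mink (a s) (a s) = -ε)
    (hqh : ∀ s, mink (q s) (h s) = 0) (hqa : ∀ s, mink (q s) (a s) = 0)
    (hha : ∀ s, mink (h s) (a s) = 0)
    (hpos : ∀ s, ε * ((k₂ s) ^ 2 - (k₁ s) ^ 2) > 0)
    (d : ℝ)
    (hd : ∀ s, (k₁ s) ^ 2 / (Real.sqrt (ε * ((k₂ s) ^ 2 - (k₁ s) ^ 2))) ^ 3 *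
      deriv (fun t => k₂ t / k₁ t) s = d) :
    (∀ s, deriv (fun t =>
        (k₂ t / Real.sqrt (ε * ((k₂ t) ^ 2 - (k₁ t) ^ 2))) • q t - d • h t -
          (ε * k₁ t / Real.sqrt (ε * ((k₂ t) ^ 2 - (k₁ t) ^ 2))) • a t) s = 0) ∧
    (∃ c, ∀ s, mink (h s)
        ((k₂ s / Real.sqrt (ε * ((k₂ s) ^ 2 - (k₁ s) ^ 2))) • q s - d • h s -
          (ε * k₁ s / Real.sqrt (ε * ((k₂ s) ^ 2 - (k₁ s) ^ 2))) • a s) = c) := by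
  have hε2 : ε ^ 2 = 1 := by rcases hε with h1 | h1 <;> simp [h1]
  constructor
  · intro s
    set r := Real.sqrt (ε * ((k₂ s) ^ 2 - (k₁ s) ^ 2)) with hrdef
    have hrpos : 0 < r := Real.sqrt_pos.2 (hpos s)
    have hr2 : r ^ 2 = ε * ((k₂ s) ^ 2 - (k₁ s) ^ 2) := Real.sq_sqrt (hpos s).le
    set K1' := deriv k₁ s
    set K2' := deriv k₂ s
    have hk1d : HasDerivAt k₁ K1' s := (hsk₁.differentiable (by simp) s).hasDerivAt
    have hk2d : HasDerivAt k₂ K2' s := (hsk₂.differentiable (by simp) s).hasDerivAt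
    have hq : HasDerivAt q (k₁ s • h s) s := by
      have := (hsq.differentiable (by simp) s).hasDerivAt
      rwa [hF1 s] at this
    have hh : HasDerivAt h ((-(ε * k₁ s)) • q s + k₂ s • a s) s := by
      have := (hsh.differentiable (by simp) s).hasDerivAt
      rwa [hF2 s] at this
    have ha : HasDerivAt a ((ε * k₂ s) • h s) s := by
      have := (hsa.differentiable (by simp) s).hasDerivAt
      rwa [hF3 s] at this
    have hw : HasDerivAt (fun t => ε * ((k₂ t) ^ 2 - (k₁ t) ^ 2))
        (ε * (2 * k₂ s ^ 1 * K2' - 2 * k₁ s ^ 1 * K1')) s :=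
      ((hk2d.pow 2).sub (hk1d.pow 2)).const_mul ε
    have hrd : HasDerivAt (fun t => Real.sqrt (ε * ((k₂ t) ^ 2 - (k₁ t) ^ 2)))
        ((ε * (2 * k₂ s ^ 1 * K2' - 2 * k₁ s ^ 1 * K1')) / (2 * r)) s :=
      hw.sqrt (hpos s).ne'
    have hf : HasDerivAt (fun t => k₂ t / Real.sqrt (ε * ((k₂ t) ^ 2 - (k₁ t) ^ 2)))
        ((K2' * r - k₂ s * ((ε * (2 * k₂ s ^ 1 * K2' - 2 * k₁ s ^ 1 * K1')) / (2 * r))) / r ^ 2) s :=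
      hk2d.div hrd hrpos.ne'
    have hg : HasDerivAt (fun t => ε * k₁ t / Real.sqrt (ε * ((k₂ t) ^ 2 - (k₁ t) ^ 2)))
        ((ε * K1' * r - ε * k₁ s * ((ε * (2 * k₂ s ^ 1 * K2' - 2 * k₁ s ^ 1 * K1')) / (2 * r))) / r ^ 2) s :=
      (hk1d.const_mul ε).div hrd hrpos.ne'
    -- value of d
    have hdiv : deriv (fun t => k₂ t / k₁ t) s = (K2' * k₁ s - k₂ s * K1') / (k₁ s) ^ 2 :=
      (hk2d.div hk1d (hk₁ s)).deriv
    have hdA : d * r ^ 3 = K2' * k₁ s - k₂ s * K1' := by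
      have := hd s
      rw [hdiv] at this
      field_simp [← hrdef, hrpos.ne', hk₁ s] at this
      rw [← hrdef] at this
      apply mul_right_cancel₀ (pow_ne_zero 2 (hk₁ s))
      linear_combination -(k₁ s) ^ 2 * this
    have e1 : (K2' * r - k₂ s * ((ε * (2 * k₂ s ^ 1 * K2' - 2 * k₁ s ^ 1 * K1')) / (2 * r))) / r ^ 2
        = -(ε * k₁ s * d) := by
      field_simp
      linear_combination K2' * hr2 + ε * k₁ s * hdA
    have e2 : (ε * K1' * r - ε * k₁ s * ((ε * (2 * k₂ s ^ 1 * K2' - 2 * k₁ s ^ 1 * K1')) / (2 * r))) / r ^ 2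
        = -(k₂ s * d) := by
      field_simp
      linear_combination ε * K1' * hr2 + k₂ s * hdA +
        (k₂ s ^ 2 * K1' - k₁ s * k₂ s * K2') * hε2
    have e3 : (k₂ s / r) * k₁ s = (ε * k₁ s / r) * (ε * k₂ s) := by
      field_simp
      linear_combination (-(k₁ s * k₂ s)) * hε2
    have H := ((hf.smul hq).sub ((hasDerivAt_const s d).smul hh)).sub (hg.smul ha)
    rw [e1, e2] at H
    erw [H.deriv]
    funext i
    simp only [Pi.sub_apply, Pi.add_apply, Pi.smul_apply, Pi.zero_apply, smul_eq_mul, zero_mul]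
    linear_combination (h s i) * e3
  · refine ⟨-d, fun s => ?_⟩
    have h1 := hqh s
    have h2 := hhh s
    have h3 := hha s
    simp only [mink, Pi.sub_apply, Pi.smul_apply, smul_eq_mul] at h1 h2 h3 ⊢
    linear_combination (k₂ s / Real.sqrt (ε * ((k₂ s) ^ 2 - (k₁ s) ^ 2))) * h1 - d * h2
      - (ε * k₁ s / Real.sqrt (ε * ((k₂ s) ^ 2 - (k₁ s) ^ 2))) * h3
end

section
/- Let q, h, a : ℝ → ℝ³ satisfy the timelike Frenet equations q' = k₁ h, h' = -ε k₁ q + k₂ a, a' = ε k₂ h with k₁, k₂ nonvanishing and ε = ±1. Then for any fixed vector u, ⟨q, u⟩ is constant if and only if ⟨a, u⟩ is constant. (Hence a surface is a q-slant ruled surface if and only if it is an a-slant ruled surface.) -/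
lemma mink_hasDerivAt (f : ℝ → Fin 3 → ℝ) (hf : Differentiable ℝ f)
    (u : Fin 3 → ℝ) (s : ℝ) :
    HasDerivAt (fun t => mink (f t) u) (mink (deriv f s) u) s := by
  have hd := (hf s).hasDerivAt
  rw [hasDerivAt_pi] at hd
  have h0 := (hd 0).mul_const (u 0)
  have h1 := (hd 1).mul_const (u 1)
  have h2 := (hd 2).mul_const (u 2)
  have := (h0.neg.add h1).add h2
  simpa [mink, add_assoc, Pi.add_def, Pi.neg_def] using this

theorem stmt16 (q h a : ℝ → Fin 3 → ℝ) (k₁ k₂ : ℝ → ℝ) (ε : ℝ)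
    (hsq : ContDiff ℝ (⊤ : ℕ∞) q) (hsh : ContDiff ℝ (⊤ : ℕ∞) h) (hsa : ContDiff ℝ (⊤ : ℕ∞) a)
    (hsk₁ : ContDiff ℝ (⊤ : ℕ∞) k₁) (hsk₂ : ContDiff ℝ (⊤ : ℕ∞) k₂)
    (hk₁ : ∀ s, k₁ s ≠ 0) (hk₂ : ∀ s, k₂ s ≠ 0)
    (hε : ε = 1 ∨ ε = -1)
    (hF1 : ∀ s, deriv q s = k₁ s • h s)
    (hF2 : ∀ s, deriv h s = (-(ε * k₁ s)) • q s + k₂ s • a s)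
    (hF3 : ∀ s, deriv a s = (ε * k₂ s) • h s) :
    ∀ u : Fin 3 → ℝ,
      (∃ c, ∀ s, mink (q s) u = c) ↔ (∃ c, ∀ s, mink (a s) u = c) := by
  intro u
  have hε0 : ε ≠ 0 := by rcases hε with rfl | rfl <;> norm_num
  have hdq : Differentiable ℝ q := hsq.differentiable (by simp)
  have hdh : Differentiable ℝ h := hsh.differentiable (by simp)
  have hda : Differentiable ℝ a := hsa.differentiable (by simp)
  have hq' : ∀ s, HasDerivAt (fun t => mink (q t) u) (k₁ s * mink (h s) u) s := by
    intro s
    have := mink_hasDerivAt q hdq u s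
    rw [hF1 s] at this
    simpa [mink, Pi.smul_apply, smul_eq_mul, mul_add, mul_comm, mul_left_comm,
      mul_assoc] using this
  have ha' : ∀ s, HasDerivAt (fun t => mink (a t) u) (ε * k₂ s * mink (h s) u) s := by
    intro s
    have := mink_hasDerivAt a hda u s
    rw [hF3 s] at this
    have e : mink ((ε * k₂ s) • h s) u = ε * k₂ s * mink (h s) u := by
      simp [mink, Pi.smul_apply]; ring
    rwa [e] at this
  constructor
  · rintro ⟨c, hc⟩
    have hh0 : ∀ s, mink (h s) u = 0 := by
      intro s
      have : HasDerivAt (fun _ : ℝ => c) (k₁ s * mink (h s) u) s := by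
        have := hq' s
        simp only [hc] at this
        exact this
      have := this.deriv
      simp at this
      tauto
    have hconst : ∀ s, mink (a s) u = mink (a 0) u := by
      intro s
      apply is_const_of_deriv_eq_zero (f := fun t => mink (a t) u)
      · intro t; exact (ha' t).differentiableAt
      · intro t
        have := (ha' t).deriv
        rw [this, hh0 t, mul_zero]
    exact ⟨mink (a 0) u, hconst⟩
  · rintro ⟨c, hc⟩
    have hh0 : ∀ s, mink (h s) u = 0 := by
      intro s
      have : HasDerivAt (fun _ : ℝ => c) (ε * k₂ s * mink (h s) u) s := by
        have := ha' s
        simp only [hc] at this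
        exact this
      have hd := this.deriv
      rw [deriv_const] at hd
      rcases mul_eq_zero.1 hd.symm with h3 | h3
      · exact absurd h3 (mul_ne_zero hε0 (hk₂ s))
      · exact h3
    have hconst : ∀ s, mink (q s) u = mink (q 0) u := by
      intro s
      apply is_const_of_deriv_eq_zero (f := fun t => mink (q t) u)
      · intro t; exact (hq' t).differentiableAt
      · intro t
        have := (hq' t).deriv
        rw [this, hh0 t, mul_zero]
    exact ⟨mink (q 0) u, hconst⟩
end
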